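/- Let w be a word of length n with an Abelian period (h,p) and let d = (n - h) mod p with d ≠ 0. Then for any letter a: (h,p) is an Abelian period of wa if and only if the Parikh vector of w[n-d+1..n]·a is contained componentwise in the Parikh vector of w[n-d-p+1..n-d]. -/

import Mathlib

/-! With the head length fixed, a word has only one factorization into blocks of length `p`
followed by a tail shorter than `p`. So an Abelian period `(h, p)` of `w·a` must reuse the blocks
of `w` and continue either with the tail `w[n-d+1..n]·a` (if `d + 1 < p`), whose Parikh vector must
be contained in that of a block, or with the new block `w[n-d+1..n]·a` and an empty tail
(if `d + 1 = p`), whose Parikh vector must equal that of a block; for words of the same length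
`p`, equality and containment of Parikh vectors coincide. -/

/-- A word `w` has Abelian period `(h, p)` if `w = u₀u₁⋯u_{k-1}u_k` where `|u₀| = h`,
all the middle blocks `u₁, …, u_{k-1}` have length `p` and the same Parikh vector,
the Parikh vectors of the head `u₀` and the tail `u_k` are contained in that common
Parikh vector, `h < p`, there is at least one middle block, and the tail has length
`< p`. -/
def HasAbelianPeriod {α : Type*} [DecidableEq α] (w : List α) (h p : ℕ) : Prop :=
  h < p ∧ ∃ (u0 : List α) (us : List (List α)) (uk : List α),
    w = u0 ++ us.flatten ++ uk ∧
    u0.length = h ∧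
    us ≠ [] ∧
    (∀ u ∈ us, u.length = p) ∧
    (∀ u ∈ us, ∀ v ∈ us, ∀ a : α, u.count a = v.count a) ∧
    (∀ u ∈ us, ∀ a : α, u0.count a ≤ u.count a) ∧
    (∀ u ∈ us, ∀ a : α, uk.count a ≤ u.count a) ∧
    uk.length < p

namespace List

variable {α : Type*} {p : ℕ}

theorem length_flatten_of_forall_length_eq {us : List (List α)} (h : ∀ u ∈ us, u.length = p) :
    us.flatten.length = us.length * p := by
  rw [length_flatten, map_congr_left h, map_const', sum_replicate, smul_eq_mul]

theorem flatten_append_inj {us vs : List (List α)} {uk vk : List α}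
    (hus : ∀ u ∈ us, u.length = p) (hvs : ∀ v ∈ vs, v.length = p)
    (huk : uk.length < p) (hvk : vk.length < p) (e : us.flatten ++ uk = vs.flatten ++ vk) :
    us = vs ∧ uk = vk := by
  induction us generalizing vs with
  | nil =>
    cases vs with
    | nil => exact ⟨rfl, by simpa using e⟩
    | cons v vs =>
      have := congrArg length e
      simp only [flatten_nil, nil_append, flatten_cons, length_append, hvs v mem_cons_self] at this
      omega
  | cons u us ih =>
    cases vs with
    | nil =>
      have := congrArg length e
      simp only [flatten_nil, nil_append, flatten_cons, length_append, hus u mem_cons_self] at this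
      omega
    | cons v vs =>
      simp only [flatten_cons, append_assoc] at e
      obtain ⟨rfl, hrest⟩ := append_inj e (by rw [hus u mem_cons_self, hvs v mem_cons_self])
      obtain ⟨rfl, rfl⟩ := ih (fun x hx => hus x (mem_cons_of_mem _ hx))
        (fun x hx => hvs x (mem_cons_of_mem _ hx)) hrest
      exact ⟨rfl, rfl⟩

end List

open List

section AbelianPeriod

variable {α : Type*} [DecidableEq α] {p : ℕ}

structure IsAbelianFactorization (u0 : List α) (us : List (List α)) (uk : List α) (p : ℕ) :
    Prop where
  ne_nil : us ≠ []
  length_eq : ∀ u ∈ us, u.length = p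
  count_eq : ∀ u ∈ us, ∀ v ∈ us, ∀ a, u.count a = v.count a
  count_head_le : ∀ u ∈ us, ∀ a, u0.count a ≤ u.count a
  count_tail_le : ∀ u ∈ us, ∀ a, uk.count a ≤ u.count a
  length_tail_lt : uk.length < p

theorem hasAbelianPeriod_iff_exists_isAbelianFactorization {w : List α} {h : ℕ} :
    HasAbelianPeriod w h p ↔ h < p ∧ ∃ u0 us uk,
      w = u0 ++ us.flatten ++ uk ∧ u0.length = h ∧ IsAbelianFactorization u0 us uk p := by
  constructor
  · rintro ⟨hp, u0, us, uk, hw, hu0, h1, h2, h3, h4, h5, h6⟩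
    exact ⟨hp, u0, us, uk, hw, hu0, h1, h2, h3, h4, h5, h6⟩
  · rintro ⟨hp, u0, us, uk, hw, hu0, h1, h2, h3, h4, h5, h6⟩
    exact ⟨hp, u0, us, uk, hw, hu0, h1, h2, h3, h4, h5, h6⟩

namespace IsAbelianFactorization

variable {u0 uk : List α} {us : List (List α)} {B : List α}

theorem with_tail (hf : IsAbelianFactorization u0 us uk p) {v : List α} (hv : v.length < p)
    (hB : B ∈ us) (hvB : ∀ a, v.count a ≤ B.count a) : IsAbelianFactorization u0 us v p where
  __ := hf
  count_tail_le u hu a := (hvB a).trans_eq (hf.count_eq B hB u hu a)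
  length_tail_lt := hv

theorem append_block (hf : IsAbelianFactorization u0 us uk p) {v : List α} (hv : v.length = p)
    (hB : B ∈ us) (hvB : ∀ a, v.count a = B.count a) :
    IsAbelianFactorization u0 (us ++ [v]) [] p := by
  have hcount : ∀ u ∈ us ++ [v], ∀ a, u.count a = B.count a := by
    simp only [mem_append, mem_singleton]
    rintro u (hu | rfl) a
    exacts [hf.count_eq u hu B hB a, hvB a]
  refine ⟨by simp, ?_, fun u hu w hw a => (hcount u hu a).trans (hcount w hw a).symm, ?_, by simp,
    Nat.zero_lt_of_lt hf.length_tail_lt⟩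
  · simp only [mem_append, mem_singleton]
    rintro u (hu | rfl)
    exacts [hf.length_eq u hu, hv]
  · intro u hu a
    exact (hf.count_head_le B hB a).trans_eq (hcount u hu a).symm

end IsAbelianFactorization

theorem hasAbelianPeriod_append_singleton_iff {u0 uk : List α} {us : List (List α)}
    (hf : IsAbelianFactorization u0 us uk p) (hp : u0.length < p) {B : List α} (hB : B ∈ us)
    (a : α) :
    HasAbelianPeriod (u0 ++ us.flatten ++ (uk ++ [a])) u0.length p ↔
      ∀ b, (uk ++ [a]).count b ≤ B.count b := by
  have hsplit : uk.length + 1 < p ∨ uk.length + 1 = p := by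
    have := hf.length_tail_lt
    omega
  have hlen : (uk ++ [a]).length = uk.length + 1 := by simp
  rw [hasAbelianPeriod_iff_exists_isAbelianFactorization]
  constructor
  · rintro ⟨-, v0, vs, vk, e, hv0, hg⟩
    rw [append_assoc, append_assoc] at e
    obtain ⟨-, e⟩ := append_inj e hv0.symm
    rcases hsplit with hlt | heq
    · obtain ⟨rfl, rfl⟩ :=
        flatten_append_inj hf.length_eq hg.length_eq (hlen ▸ hlt) hg.length_tail_lt e
      exact hg.count_tail_le B hB
    · have hblocks : ∀ u ∈ us ++ [uk ++ [a]], u.length = p := by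
        simp only [mem_append, mem_singleton]
        rintro u (hu | rfl)
        exacts [hf.length_eq u hu, hlen.trans heq]
      obtain ⟨rfl, -⟩ := flatten_append_inj (uk := []) hblocks hg.length_eq
        (Nat.zero_lt_of_lt hp) hg.length_tail_lt (by simpa using e)
      exact fun b => (hg.count_eq _ (by simp) B (by simp [hB]) b).le
  · intro hle
    refine ⟨hp, ?_⟩
    rcases hsplit with hlt | heq
    · exact ⟨u0, us, uk ++ [a], rfl, rfl, hf.with_tail (hlen ▸ hlt) hB hle⟩
    · have hcount : ∀ b, (uk ++ [a]).count b = B.count b :=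
        ((subperm_ext_iff.2 fun b _ => hle b).perm_of_length_le
          (by rw [hlen, heq, hf.length_eq B hB])).count_eq
      exact ⟨u0, us ++ [uk ++ [a]], [], by simp, rfl,
        hf.append_block (hlen.trans heq) hB hcount⟩

end AbelianPeriod

theorem abelian_period_snoc_iff_general {α : Type*} [DecidableEq α]
    (w : List α) (n h p d : ℕ) (hn : w.length = n)
    (hper : HasAbelianPeriod w h p) (hd : d = (n - h) % p) (a : α) :
    HasAbelianPeriod (w ++ [a]) h p ↔
      ∀ b : α,
        ((w.drop (n - d)) ++ [a]).count b ≤ ((w.drop (n - d - p)).take p).count b := by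
  obtain ⟨hp, u0, us, uk, rfl, rfl, hf⟩ :=
    hasAbelianPeriod_iff_exists_isAbelianFactorization.1 hper
  obtain ⟨us, B, rfl⟩ := (eq_nil_or_concat' us).resolve_left hf.ne_nil
  have hB : B.length = p := hf.length_eq B (by simp)
  have hus := length_flatten_of_forall_length_eq fun u hu => hf.length_eq u (mem_append_left _ hu)
  have hw : u0 ++ (us ++ [B]).flatten ++ uk = (u0 ++ us.flatten) ++ B ++ uk := by simp
  have hn' : n = u0.length + (uk.length + p * (us.length + 1)) := by
    rw [← hn]
    simp only [flatten_append, flatten_singleton, length_append, hus, hB]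
    ring
  have hd' : d = uk.length := by
    rw [hd, hn', Nat.add_sub_cancel_left, Nat.add_mul_mod_self_left,
      Nat.mod_eq_of_lt hf.length_tail_lt]
  have hnd : n - d = (u0 ++ us.flatten).length + B.length := by
    rw [hn', hd', length_append, hus, hB]
    ring_nf
    omega
  have htail : (u0 ++ (us ++ [B]).flatten ++ uk).drop (n - d) = uk := by
    rw [hw, hnd, ← length_append, drop_left]
  have hblock : ((u0 ++ (us ++ [B]).flatten ++ uk).drop (n - d - p)).take p = B := by
    rw [hw, hnd, hB, Nat.add_sub_cancel, append_assoc, drop_left, ← hB, take_left]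
  rw [htail, hblock, append_assoc]
  exact hasAbelianPeriod_append_singleton_iff hf hp (by simp) a

/-- Let `w` be a word of length `n` with an Abelian period `(h, p)` and
let `d = (n - h) % p` with `d ≠ 0`. Then for any letter `a`: `(h, p)` is an Abelian
period of `w·a` iff the Parikh vector of `w[n-d+1..n]·a` is contained componentwise
in the Parikh vector of `w[n-d-p+1..n-d]`. -/
theorem abelian_period_snoc_iff {α : Type*} [DecidableEq α]
    (w : List α) (n h p d : ℕ) (hn : w.length = n)
    (hper : HasAbelianPeriod w h p) (hd : d = (n - h) % p) (hd0 : d ≠ 0) (a : α) :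
    HasAbelianPeriod (w ++ [a]) h p ↔
      ∀ b : α,
        ((w.drop (n - d)) ++ [a]).count b ≤ ((w.drop (n - d - p)).take p).count b :=
  abelian_period_snoc_iff_general w n h p d hn hper hd a
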